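/- Let k ≥ 2 be a power of 2, let m be a positive integer, and let p ∈ (0,1] satisfy m·p^(log k) > 30 and p < 1/30. Then for every d ∈ {0,…,log k − 1}: ζ_{d+1}·[p·(1 − p)·(1 − 30/(m·p^(log k)))]^(k/2^(d+1)) ≤ ζ_d ≤ ζ_{d+1}·[p·(1 + p)·(1 + 30/(m·p^(log k)))]^(k/2^(d+1)). -/
import Mathlib


/-- `⟨s⟩`: the set of integers `{-⌊s/2⌋, …, ⌊s/2⌋}`. -/
noncomputable def intRange (s : ℝ) : Finset ℤ := Finset.Icc (-⌊s / 2⌋) ⌊s / 2⌋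

/-- `ζ_d`: the probability that independent uniform samples `x₁,…,x_{k/2^d} ← U_{m·p^d}`
(with `k = 2^κ`) satisfy all the block-sum filters at levels `t ∈ {d+1,…,κ}` and have total
sum `0`. -/
noncomputable def zeta (κ m : ℕ) (p : ℝ) (d : ℕ) : ℝ :=
  (Nat.card {x : Fin (2 ^ (κ - d)) → ↥(intRange ((m : ℝ) * p ^ d)) //
      (∀ t ∈ Finset.Icc (d + 1) κ, ∀ i < 2 ^ (κ - t),
          (∑ j : Fin (2 ^ (κ - d)),
              if i * 2 ^ (t - d) ≤ (j : ℕ) ∧ (j : ℕ) < (i + 1) * 2 ^ (t - d)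
              then (x j : ℤ) else 0)
            ∈ intRange ((m : ℝ) * p ^ t)) ∧
        (∑ j : Fin (2 ^ (κ - d)), (x j : ℤ)) = 0} : ℝ) /
    (Fintype.card (Fin (2 ^ (κ - d)) → ↥(intRange ((m : ℝ) * p ^ d))) : ℝ)

section ZetaAux

private lemma sum_range_two_mul (N : ℕ) (g : ℕ → ℤ) :
    ∑ j ∈ Finset.range (2 * N), g j = ∑ i ∈ Finset.range N, (g (2 * i) + g (2 * i + 1)) := by
  induction N with
  | zero => simp
  | succ n ih =>
    have h : 2 * (n + 1) = (2 * n) + 1 + 1 := by ring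
    rw [h, Finset.sum_range_succ, Finset.sum_range_succ, Finset.sum_range_succ, ih]
    ring

private lemma pair_sum (N M i : ℕ) (X : ℕ → ℤ) :
    (∑ j ∈ Finset.range (2 * N),
        if i * (2 * M) ≤ j ∧ j < (i + 1) * (2 * M) then X j else 0)
      = ∑ i' ∈ Finset.range N,
          (if i * M ≤ i' ∧ i' < (i + 1) * M then X (2 * i') + X (2 * i' + 1) else 0) := by
  rw [sum_range_two_mul]
  refine Finset.sum_congr rfl fun i' _ => ?_
  have h1 : (i + 1) * (2 * M) = 2 * (i * M) + 2 * M := by ring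
  have h2 : i * (2 * M) = 2 * (i * M) := by ring
  have h3 : (i + 1) * M = i * M + M := by ring
  rw [h1, h2, h3]
  generalize i * M = a
  by_cases h : a ≤ i' ∧ i' < a + M
  · rw [if_pos h, if_pos (by omega), if_pos (by omega)]
  · rw [if_neg h, if_neg (by omega), if_neg (by omega), add_zero]

private lemma finsum_ext (n : ℕ) (x : Fin n → ℤ) (P : ℕ → Prop) [DecidablePred P] :
    (∑ j : Fin n, if P j.1 then x j else 0)
      = ∑ j ∈ Finset.range n, (if P j then (if h : j < n then x ⟨j, h⟩ else 0) else 0) := by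
  rw [← Fin.sum_univ_eq_sum_range (fun j => if P j then (if h : j < n then x ⟨j, h⟩ else 0) else 0) n]
  refine Finset.sum_congr rfl fun j _ => ?_
  simp [j.isLt]

private lemma finsum_ext' (n : ℕ) (x : Fin n → ℤ) :
    (∑ j : Fin n, x j) = ∑ j ∈ Finset.range n, (if h : j < n then x ⟨j, h⟩ else 0) := by
  rw [← Fin.sum_univ_eq_sum_range (fun j => if h : j < n then x ⟨j, h⟩ else 0) n]
  refine Finset.sum_congr rfl fun j _ => ?_
  simp [j.isLt]

private lemma pick_single (n i : ℕ) (hi : i < n) (Y : ℕ → ℤ) :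
    (∑ i' ∈ Finset.range n, if i * 1 ≤ i' ∧ i' < (i + 1) * 1 then Y i' else 0) = Y i := by
  have h : ∀ i' : ℕ, (i * 1 ≤ i' ∧ i' < (i + 1) * 1) ↔ i' = i := by intro i'; omega
  calc (∑ i' ∈ Finset.range n, if i * 1 ≤ i' ∧ i' < (i + 1) * 1 then Y i' else 0)
      = ∑ i' ∈ Finset.range n, if i' = i then Y i' else 0 :=
        Finset.sum_congr rfl fun i' _ => by rw [if_congr (h i') rfl rfl]
    _ = Y i := by rw [Finset.sum_ite_eq' (Finset.range n) i Y, if_pos (Finset.mem_range.mpr hi)]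

private lemma transfer (κ d t : ℕ) (hd : d < κ) (ht : d + 1 ≤ t) (i : ℕ) (X Y : ℕ → ℤ)
    (hXY : ∀ i' < 2 ^ (κ - (d + 1)), Y i' = X (2 * i') + X (2 * i' + 1)) :
    (∑ j ∈ Finset.range (2 ^ (κ - d)),
        if i * 2 ^ (t - d) ≤ j ∧ j < (i + 1) * 2 ^ (t - d) then X j else 0)
      = ∑ i' ∈ Finset.range (2 ^ (κ - (d + 1))),
          (if i * 2 ^ (t - (d + 1)) ≤ i' ∧ i' < (i + 1) * 2 ^ (t - (d + 1)) then Y i' else 0) := by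
  have h1 : 2 ^ (κ - d) = 2 * 2 ^ (κ - (d + 1)) := by
    rw [show κ - d = (κ - (d + 1)) + 1 by omega, pow_succ]; ring
  have h2 : 2 ^ (t - d) = 2 * 2 ^ (t - (d + 1)) := by
    rw [show t - d = (t - (d + 1)) + 1 by omega, pow_succ]; ring
  rw [h1, h2, pair_sum]
  refine Finset.sum_congr rfl fun i' hi' => ?_
  by_cases h : i * 2 ^ (t - (d + 1)) ≤ i' ∧ i' < (i + 1) * 2 ^ (t - (d + 1))
  · rw [if_pos h, if_pos h, hXY i' (Finset.mem_range.mp hi')]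
  · rw [if_neg h, if_neg h]

private lemma transfer_total (κ d : ℕ) (hd : d < κ) (X Y : ℕ → ℤ)
    (hXY : ∀ i' < 2 ^ (κ - (d + 1)), Y i' = X (2 * i') + X (2 * i' + 1)) :
    (∑ j ∈ Finset.range (2 ^ (κ - d)), X j)
      = ∑ i' ∈ Finset.range (2 ^ (κ - (d + 1))), Y i' := by
  have h1 : 2 ^ (κ - d) = 2 * 2 ^ (κ - (d + 1)) := by
    rw [show κ - d = (κ - (d + 1)) + 1 by omega, pow_succ]; ring
  rw [h1, sum_range_two_mul]
  exact Finset.sum_congr rfl fun i' hi' => (hXY i' (Finset.mem_range.mp hi')).symm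

private lemma hXY_of_hxy (κ d : ℕ) (hd : d < κ) (x : Fin (2 ^ (κ - d)) → ℤ)
    (y : Fin (2 ^ (κ - (d + 1))) → ℤ)
    (hxy : ∀ (i : Fin (2 ^ (κ - (d + 1)))) (h0 : 2 * i.1 < 2 ^ (κ - d))
        (h1 : 2 * i.1 + 1 < 2 ^ (κ - d)), y i = x ⟨2 * i.1, h0⟩ + x ⟨2 * i.1 + 1, h1⟩) :
    ∀ i' < 2 ^ (κ - (d + 1)),
      (if h : i' < 2 ^ (κ - (d + 1)) then y ⟨i', h⟩ else 0)
        = (if h : 2 * i' < 2 ^ (κ - d) then x ⟨2 * i', h⟩ else 0)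
          + (if h : 2 * i' + 1 < 2 ^ (κ - d) then x ⟨2 * i' + 1, h⟩ else 0) := by
  have h2n : 2 ^ (κ - d) = 2 * 2 ^ (κ - (d + 1)) := by
    rw [show κ - d = (κ - (d + 1)) + 1 by omega, pow_succ]; ring
  intro i' hi'
  have h0 : 2 * i' < 2 ^ (κ - d) := by omega
  have h1 : 2 * i' + 1 < 2 ^ (κ - d) := by omega
  rw [dif_pos hi', dif_pos h0, dif_pos h1]
  exact hxy ⟨i', hi'⟩ h0 h1

private lemma blocks_eq (κ d : ℕ) (hd : d < κ) (x : Fin (2 ^ (κ - d)) → ℤ)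
    (y : Fin (2 ^ (κ - (d + 1))) → ℤ)
    (hxy : ∀ (i : Fin (2 ^ (κ - (d + 1)))) (h0 : 2 * i.1 < 2 ^ (κ - d))
        (h1 : 2 * i.1 + 1 < 2 ^ (κ - d)), y i = x ⟨2 * i.1, h0⟩ + x ⟨2 * i.1 + 1, h1⟩)
    (t : ℕ) (ht : d + 1 ≤ t) (i : ℕ) :
    (∑ j : Fin (2 ^ (κ - d)),
        if i * 2 ^ (t - d) ≤ (j : ℕ) ∧ (j : ℕ) < (i + 1) * 2 ^ (t - d) then x j else 0)
      = ∑ i' : Fin (2 ^ (κ - (d + 1))),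
          (if i * 2 ^ (t - (d + 1)) ≤ (i' : ℕ) ∧ (i' : ℕ) < (i + 1) * 2 ^ (t - (d + 1))
            then y i' else 0) := by
  rw [finsum_ext _ x (fun a => i * 2 ^ (t - d) ≤ a ∧ a < (i + 1) * 2 ^ (t - d)),
    finsum_ext _ y (fun a => i * 2 ^ (t - (d + 1)) ≤ a ∧ a < (i + 1) * 2 ^ (t - (d + 1)))]
  exact transfer κ d t hd ht i _ _ (hXY_of_hxy κ d hd x y hxy)

private lemma total_eq (κ d : ℕ) (hd : d < κ) (x : Fin (2 ^ (κ - d)) → ℤ)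
    (y : Fin (2 ^ (κ - (d + 1))) → ℤ)
    (hxy : ∀ (i : Fin (2 ^ (κ - (d + 1)))) (h0 : 2 * i.1 < 2 ^ (κ - d))
        (h1 : 2 * i.1 + 1 < 2 ^ (κ - d)), y i = x ⟨2 * i.1, h0⟩ + x ⟨2 * i.1 + 1, h1⟩) :
    (∑ j : Fin (2 ^ (κ - d)), x j) = ∑ i' : Fin (2 ^ (κ - (d + 1))), y i' := by
  rw [finsum_ext' _ x, finsum_ext' _ y]
  exact transfer_total κ d hd _ _ (hXY_of_hxy κ d hd x y hxy)

private lemma first_block (κ d : ℕ) (hd : d < κ) (x : Fin (2 ^ (κ - d)) → ℤ)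
    (y : Fin (2 ^ (κ - (d + 1))) → ℤ)
    (hxy : ∀ (i : Fin (2 ^ (κ - (d + 1)))) (h0 : 2 * i.1 < 2 ^ (κ - d))
        (h1 : 2 * i.1 + 1 < 2 ^ (κ - d)), y i = x ⟨2 * i.1, h0⟩ + x ⟨2 * i.1 + 1, h1⟩)
    (i : ℕ) (hi : i < 2 ^ (κ - (d + 1))) :
    (∑ j : Fin (2 ^ (κ - d)),
        if i * 2 ^ (d + 1 - d) ≤ (j : ℕ) ∧ (j : ℕ) < (i + 1) * 2 ^ (d + 1 - d) then x j else 0)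
      = y ⟨i, hi⟩ := by
  rw [blocks_eq κ d hd x y hxy (d + 1) le_rfl i,
    finsum_ext _ y (fun a => i * 2 ^ (d + 1 - (d + 1)) ≤ a ∧ a < (i + 1) * 2 ^ (d + 1 - (d + 1)))]
  have h0 : 2 ^ (d + 1 - (d + 1)) = 1 := by simp
  rw [h0, pick_single _ i hi, dif_pos hi]

private lemma mem_intRange {a : ℤ} {s : ℝ} :
    a ∈ intRange s ↔ -⌊s / 2⌋ ≤ a ∧ a ≤ ⌊s / 2⌋ := Finset.mem_Icc

private def Pred (κ m : ℕ) (p : ℝ) (d : ℕ)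
    (x : Fin (2 ^ (κ - d)) → ↥(intRange ((m : ℝ) * p ^ d))) : Prop :=
  (∀ t ∈ Finset.Icc (d + 1) κ, ∀ i < 2 ^ (κ - t),
      (∑ j : Fin (2 ^ (κ - d)),
          if i * 2 ^ (t - d) ≤ (j : ℕ) ∧ (j : ℕ) < (i + 1) * 2 ^ (t - d)
          then (x j : ℤ) else 0)
        ∈ intRange ((m : ℝ) * p ^ t)) ∧
    (∑ j : Fin (2 ^ (κ - d)), (x j : ℤ)) = 0

private abbrev G0 (κ m : ℕ) (p : ℝ) (d : ℕ) :=
  {x : Fin (2 ^ (κ - d)) → ↥(intRange ((m : ℝ) * p ^ d)) // Pred κ m p d x}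

private lemma zeta_eq (κ m : ℕ) (p : ℝ) (d : ℕ) :
    zeta κ m p d = (Nat.card (G0 κ m p d) : ℝ)
      / ((intRange ((m : ℝ) * p ^ d)).card : ℝ) ^ 2 ^ (κ - d) := by
  have hc : Fintype.card (Fin (2 ^ (κ - d)) → ↥(intRange ((m : ℝ) * p ^ d)))
      = (intRange ((m : ℝ) * p ^ d)).card ^ 2 ^ (κ - d) := by
    simp [Fintype.card_pi, Fintype.card_coe]
  unfold zeta
  rw [hc]
  push_cast
  rfl

end ZetaAux
section ZetaAux2

private def j0 (κ d : ℕ) (hd : d < κ) (i : Fin (2 ^ (κ - (d + 1)))) : Fin (2 ^ (κ - d)) :=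
  ⟨2 * i.1, by
    have h2n : 2 ^ (κ - d) = 2 * 2 ^ (κ - (d + 1)) := by
      rw [show κ - d = (κ - (d + 1)) + 1 by omega, pow_succ]; ring
    have := i.isLt; omega⟩

private def j1 (κ d : ℕ) (hd : d < κ) (i : Fin (2 ^ (κ - (d + 1)))) : Fin (2 ^ (κ - d)) :=
  ⟨2 * i.1 + 1, by
    have h2n : 2 ^ (κ - d) = 2 * 2 ^ (κ - (d + 1)) := by
      rw [show κ - d = (κ - (d + 1)) + 1 by omega, pow_succ]; ring
    have := i.isLt; omega⟩

private def yval (κ m : ℕ) (p : ℝ) (d : ℕ) (hd : d < κ)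
    (x : Fin (2 ^ (κ - d)) → ↥(intRange ((m : ℝ) * p ^ d)))
    (i : Fin (2 ^ (κ - (d + 1)))) : ℤ :=
  (x (j0 κ d hd i) : ℤ) + (x (j1 κ d hd i) : ℤ)

private lemma yval_hxy (κ m : ℕ) (p : ℝ) (d : ℕ) (hd : d < κ)
    (x : Fin (2 ^ (κ - d)) → ↥(intRange ((m : ℝ) * p ^ d))) :
    ∀ (i : Fin (2 ^ (κ - (d + 1)))) (h0 : 2 * i.1 < 2 ^ (κ - d))
        (h1 : 2 * i.1 + 1 < 2 ^ (κ - d)),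
      yval κ m p d hd x i
        = (fun j => (x j : ℤ)) ⟨2 * i.1, h0⟩ + (fun j => (x j : ℤ)) ⟨2 * i.1 + 1, h1⟩ :=
  fun _ _ _ => rfl

private lemma yval_mem (κ m : ℕ) (p : ℝ) (d : ℕ) (hd : d < κ)
    (x : Fin (2 ^ (κ - d)) → ↥(intRange ((m : ℝ) * p ^ d))) (hx : Pred κ m p d x)
    (i : Fin (2 ^ (κ - (d + 1)))) :
    yval κ m p d hd x i ∈ intRange ((m : ℝ) * p ^ (d + 1)) := by
  have h := hx.1 (d + 1) (Finset.mem_Icc.mpr ⟨le_rfl, by omega⟩) i.1 i.isLt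
  rw [first_block κ d hd (fun j => (x j : ℤ)) (yval κ m p d hd x)
    (yval_hxy κ m p d hd x) i.1 i.isLt] at h
  simpa using h

private lemma pred1_of (κ m : ℕ) (p : ℝ) (d : ℕ) (hd : d < κ)
    (x : Fin (2 ^ (κ - d)) → ↥(intRange ((m : ℝ) * p ^ d))) (hx : Pred κ m p d x)
    (y' : Fin (2 ^ (κ - (d + 1))) → ↥(intRange ((m : ℝ) * p ^ (d + 1))))
    (hy' : ∀ i, (y' i : ℤ) = yval κ m p d hd x i) : Pred κ m p (d + 1) y' := by
  refine ⟨?_, ?_⟩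
  · intro t ht i hi
    have ht' := Finset.mem_Icc.mp ht
    have e : (∑ i' : Fin (2 ^ (κ - (d + 1))),
          if i * 2 ^ (t - (d + 1)) ≤ (i' : ℕ) ∧ (i' : ℕ) < (i + 1) * 2 ^ (t - (d + 1))
          then (y' i' : ℤ) else 0)
        = ∑ i' : Fin (2 ^ (κ - (d + 1))),
            (if i * 2 ^ (t - (d + 1)) ≤ (i' : ℕ) ∧ (i' : ℕ) < (i + 1) * 2 ^ (t - (d + 1))
              then yval κ m p d hd x i' else 0) :=
      Finset.sum_congr rfl fun i' _ => by rw [hy']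
    rw [e, ← blocks_eq κ d hd (fun j => (x j : ℤ)) (yval κ m p d hd x)
      (yval_hxy κ m p d hd x) t (by omega) i]
    exact hx.1 t (Finset.mem_Icc.mpr ⟨by omega, ht'.2⟩) i hi
  · have e : (∑ i' : Fin (2 ^ (κ - (d + 1))), (y' i' : ℤ))
        = ∑ i' : Fin (2 ^ (κ - (d + 1))), yval κ m p d hd x i' :=
      Finset.sum_congr rfl fun i' _ => hy' i'
    rw [e, ← total_eq κ d hd (fun j => (x j : ℤ)) (yval κ m p d hd x) (yval_hxy κ m p d hd x)]
    exact hx.2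

private lemma pred0_of (κ m : ℕ) (p : ℝ) (d : ℕ) (hd : d < κ)
    (y : Fin (2 ^ (κ - (d + 1))) → ↥(intRange ((m : ℝ) * p ^ (d + 1))))
    (hy : Pred κ m p (d + 1) y)
    (x : Fin (2 ^ (κ - d)) → ↥(intRange ((m : ℝ) * p ^ d)))
    (hxy : ∀ (i : Fin (2 ^ (κ - (d + 1)))) (h0 : 2 * i.1 < 2 ^ (κ - d))
        (h1 : 2 * i.1 + 1 < 2 ^ (κ - d)),
      (y i : ℤ) = (fun j => (x j : ℤ)) ⟨2 * i.1, h0⟩ + (fun j => (x j : ℤ)) ⟨2 * i.1 + 1, h1⟩) :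
    Pred κ m p d x := by
  refine ⟨?_, ?_⟩
  · intro t ht i hi
    have ht' := Finset.mem_Icc.mp ht
    rcases eq_or_lt_of_le ht'.1 with heq | hlt
    · subst heq
      rw [first_block κ d hd (fun j => (x j : ℤ)) (fun i' => (y i' : ℤ)) hxy i hi]
      exact (y ⟨i, hi⟩).2
    · rw [blocks_eq κ d hd (fun j => (x j : ℤ)) (fun i' => (y i' : ℤ)) hxy t (by omega) i]
      exact hy.1 t (Finset.mem_Icc.mpr ⟨by omega, ht'.2⟩) i hi
  · rw [total_eq κ d hd (fun j => (x j : ℤ)) (fun i' => (y i' : ℤ)) hxy]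
    exact hy.2

end ZetaAux2
section ZetaAux3

private lemma card_upper (κ m : ℕ) (p : ℝ) (d : ℕ) (hd : d < κ) :
    Nat.card (G0 κ m p d)
      ≤ Nat.card (G0 κ m p (d + 1)) * (intRange ((m : ℝ) * p ^ d)).card ^ 2 ^ (κ - (d + 1)) := by
  have key : Nat.card (G0 κ m p (d + 1) × (Fin (2 ^ (κ - (d + 1))) → ↥(intRange ((m : ℝ) * p ^ d))))
      = Nat.card (G0 κ m p (d + 1)) * (intRange ((m : ℝ) * p ^ d)).card ^ 2 ^ (κ - (d + 1)) := by
    rw [Nat.card_prod, Nat.card_fun, Nat.card_eq_fintype_card (α := ↥(intRange ((m : ℝ) * p ^ d))),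
      Fintype.card_coe, Nat.card_eq_fintype_card (α := Fin _), Fintype.card_fin]
  rw [← key]
  apply Nat.card_le_card_of_injective
    (f := fun x : G0 κ m p d =>
      ((⟨fun i => ⟨yval κ m p d hd x.1 i, yval_mem κ m p d hd x.1 x.2 i⟩,
          pred1_of κ m p d hd x.1 x.2 _ (fun i => rfl)⟩ : G0 κ m p (d + 1)),
        fun i => x.1 (j0 κ d hd i)))
  intro x1 x2 h
  have hA : ∀ i, yval κ m p d hd x1.1 i = yval κ m p d hd x2.1 i := by
    intro i
    exact congrArg (fun z : G0 κ m p (d + 1) × (Fin (2 ^ (κ - (d + 1))) → ↥(intRange ((m : ℝ) * p ^ d))) => ((z.1.1 i : ℤ))) h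
  have hB : ∀ i, x1.1 (j0 κ d hd i) = x2.1 (j0 κ d hd i) := by
    intro i
    exact congrArg (fun z : G0 κ m p (d + 1) × (Fin (2 ^ (κ - (d + 1))) → ↥(intRange ((m : ℝ) * p ^ d))) => z.2 i) h
  have h2n : 2 ^ (κ - d) = 2 * 2 ^ (κ - (d + 1)) := by
    rw [show κ - d = (κ - (d + 1)) + 1 by omega, pow_succ]; ring
  apply Subtype.ext
  funext j
  have hhalf : j.1 / 2 < 2 ^ (κ - (d + 1)) := by have := j.isLt; omega
  set i : Fin (2 ^ (κ - (d + 1))) := ⟨j.1 / 2, hhalf⟩ with hidef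
  by_cases hpar : j.1 % 2 = 0
  · have hj : j = j0 κ d hd i := by
      apply Fin.ext
      show j.1 = 2 * (j.1 / 2)
      omega
    rw [hj]
    exact hB i
  · have hj : j = j1 κ d hd i := by
      apply Fin.ext
      show j.1 = 2 * (j.1 / 2) + 1
      omega
    rw [hj]
    apply Subtype.ext
    have e1 : (x1.1 (j1 κ d hd i) : ℤ)
        = yval κ m p d hd x1.1 i - (x1.1 (j0 κ d hd i) : ℤ) := by
      unfold yval; ring
    have e2 : (x2.1 (j1 κ d hd i) : ℤ)
        = yval κ m p d hd x2.1 i - (x2.1 (j0 κ d hd i) : ℤ) := by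
      unfold yval; ring
    rw [e1, e2, hA i, hB i]

end ZetaAux3
section ZetaAux4

private def loA (B0 c k : ℤ) : ℤ := max (-B0) (c - B0) + k - 1

private lemma loA_mem (B0 B1 c k : ℤ) (hB1 : 0 ≤ B1) (hB10 : B1 ≤ B0)
    (hc1 : -B1 ≤ c) (hc2 : c ≤ B1) (hk1 : 1 ≤ k) (hk2 : k ≤ 2 * B0 + 1 - B1) :
    (-B0 ≤ loA B0 c k ∧ loA B0 c k ≤ B0)
      ∧ (-B0 ≤ c - loA B0 c k ∧ c - loA B0 c k ≤ B0) := by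
  unfold loA
  rcases le_total (c - B0) (-B0) with h | h
  · rw [max_eq_left h]; omega
  · rw [max_eq_right h]; omega

private def xfun (κ d : ℕ) (hd : d < κ) (B0 : ℤ)
    (y k : Fin (2 ^ (κ - (d + 1))) → ℤ) (j : Fin (2 ^ (κ - d))) : ℤ :=
  if h : j.1 / 2 < 2 ^ (κ - (d + 1)) then
    (if j.1 % 2 = 0 then loA B0 (y ⟨j.1 / 2, h⟩) (k ⟨j.1 / 2, h⟩)
      else y ⟨j.1 / 2, h⟩ - loA B0 (y ⟨j.1 / 2, h⟩) (k ⟨j.1 / 2, h⟩))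
  else 0

private lemma xfun_spec0 (κ d : ℕ) (hd : d < κ) (B0 : ℤ)
    (y k : Fin (2 ^ (κ - (d + 1))) → ℤ) (i : Fin (2 ^ (κ - (d + 1))))
    (j : Fin (2 ^ (κ - d))) (hj : j.1 = 2 * i.1) :
    xfun κ d hd B0 y k j = loA B0 (y i) (k i) := by
  unfold xfun
  have h : j.1 / 2 < 2 ^ (κ - (d + 1)) := by have := i.isLt; omega
  rw [dif_pos h, if_pos (by omega),
    show (⟨j.1 / 2, h⟩ : Fin (2 ^ (κ - (d + 1)))) = i from Fin.ext (by simp; omega)]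

private lemma xfun_spec1 (κ d : ℕ) (hd : d < κ) (B0 : ℤ)
    (y k : Fin (2 ^ (κ - (d + 1))) → ℤ) (i : Fin (2 ^ (κ - (d + 1))))
    (j : Fin (2 ^ (κ - d))) (hj : j.1 = 2 * i.1 + 1) :
    xfun κ d hd B0 y k j = y i - loA B0 (y i) (k i) := by
  unfold xfun
  have h : j.1 / 2 < 2 ^ (κ - (d + 1)) := by have := i.isLt; omega
  rw [dif_pos h, if_neg (by omega),
    show (⟨j.1 / 2, h⟩ : Fin (2 ^ (κ - (d + 1)))) = i from Fin.ext (by simp; omega)]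

private lemma xfun_mem (κ m : ℕ) (p : ℝ) (d : ℕ) (hd : d < κ)
    (y k : Fin (2 ^ (κ - (d + 1))) → ℤ)
    (hB1 : 0 ≤ ⌊(m : ℝ) * p ^ (d + 1) / 2⌋)
    (hB10 : ⌊(m : ℝ) * p ^ (d + 1) / 2⌋ ≤ ⌊(m : ℝ) * p ^ d / 2⌋)
    (hy : ∀ i, y i ∈ intRange ((m : ℝ) * p ^ (d + 1)))
    (hk : ∀ i, k i ∈ Finset.Icc (1 : ℤ)
        (2 * ⌊(m : ℝ) * p ^ d / 2⌋ + 1 - ⌊(m : ℝ) * p ^ (d + 1) / 2⌋))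
    (j : Fin (2 ^ (κ - d))) :
    xfun κ d hd ⌊(m : ℝ) * p ^ d / 2⌋ y k j ∈ intRange ((m : ℝ) * p ^ d) := by
  unfold xfun
  have h : j.1 / 2 < 2 ^ (κ - (d + 1)) := by
    have h2n : 2 ^ (κ - d) = 2 * 2 ^ (κ - (d + 1)) := by
      rw [show κ - d = (κ - (d + 1)) + 1 by omega, pow_succ]; ring
    have := j.isLt; omega
  rw [dif_pos h]
  have hyi := mem_intRange.mp (hy ⟨j.1 / 2, h⟩)
  have hki := Finset.mem_Icc.mp (hk ⟨j.1 / 2, h⟩)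
  have hm := loA_mem ⌊(m : ℝ) * p ^ d / 2⌋ ⌊(m : ℝ) * p ^ (d + 1) / 2⌋
    (y ⟨j.1 / 2, h⟩) (k ⟨j.1 / 2, h⟩) hB1 hB10 hyi.1 hyi.2 hki.1 hki.2
  rw [mem_intRange]
  split_ifs
  · exact hm.1
  · exact hm.2

private lemma card_lower (κ m : ℕ) (p : ℝ) (d : ℕ) (hd : d < κ)
    (hB1 : 0 ≤ ⌊(m : ℝ) * p ^ (d + 1) / 2⌋)
    (hB10 : ⌊(m : ℝ) * p ^ (d + 1) / 2⌋ ≤ ⌊(m : ℝ) * p ^ d / 2⌋) :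
    Nat.card (G0 κ m p (d + 1))
        * (2 * ⌊(m : ℝ) * p ^ d / 2⌋ + 1 - ⌊(m : ℝ) * p ^ (d + 1) / 2⌋).toNat ^ 2 ^ (κ - (d + 1))
      ≤ Nat.card (G0 κ m p d) := by
  set B0 := ⌊(m : ℝ) * p ^ d / 2⌋ with hB0def
  set B1 := ⌊(m : ℝ) * p ^ (d + 1) / 2⌋ with hB1def
  have key : Nat.card (G0 κ m p (d + 1)
        × (Fin (2 ^ (κ - (d + 1))) → ↥(Finset.Icc (1 : ℤ) (2 * B0 + 1 - B1))))
      = Nat.card (G0 κ m p (d + 1)) * (2 * B0 + 1 - B1).toNat ^ 2 ^ (κ - (d + 1)) := by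
    rw [Nat.card_prod, Nat.card_fun,
      Nat.card_eq_fintype_card (α := ↥(Finset.Icc (1 : ℤ) (2 * B0 + 1 - B1))),
      Fintype.card_coe, Int.card_Icc, Nat.card_eq_fintype_card (α := Fin _), Fintype.card_fin]
    congr 2
    omega
  rw [← key]
  apply Nat.card_le_card_of_injective
    (f := fun z : G0 κ m p (d + 1)
        × (Fin (2 ^ (κ - (d + 1))) → ↥(Finset.Icc (1 : ℤ) (2 * B0 + 1 - B1))) =>
      (⟨fun j => ⟨xfun κ d hd B0 (fun i => (z.1.1 i : ℤ)) (fun i => (z.2 i : ℤ)) j,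
          xfun_mem κ m p d hd _ _ hB1 hB10 (fun i => (z.1.1 i).2) (fun i => (z.2 i).2) j⟩,
        pred0_of κ m p d hd z.1.1 z.1.2 _ (by
          intro i h0 h1
          show (z.1.1 i : ℤ)
            = xfun κ d hd B0 (fun i => (z.1.1 i : ℤ)) (fun i => (z.2 i : ℤ)) ⟨2 * i.1, h0⟩
              + xfun κ d hd B0 (fun i => (z.1.1 i : ℤ)) (fun i => (z.2 i : ℤ)) ⟨2 * i.1 + 1, h1⟩
          rw [xfun_spec0 κ d hd B0 _ _ i ⟨2 * i.1, h0⟩ rfl,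
            xfun_spec1 κ d hd B0 _ _ i ⟨2 * i.1 + 1, h1⟩ rfl]
          ring)⟩ : G0 κ m p d))
  intro z1 z2 h
  have h2n : 2 ^ (κ - d) = 2 * 2 ^ (κ - (d + 1)) := by
    rw [show κ - d = (κ - (d + 1)) + 1 by omega, pow_succ]; ring
  have hv : ∀ j : Fin (2 ^ (κ - d)),
      xfun κ d hd B0 (fun i => (z1.1.1 i : ℤ)) (fun i => (z1.2 i : ℤ)) j
        = xfun κ d hd B0 (fun i => (z2.1.1 i : ℤ)) (fun i => (z2.2 i : ℤ)) j := by
    intro j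
    exact congrArg (fun w : G0 κ m p d => (w.1 j : ℤ)) h
  have hyk : ∀ i : Fin (2 ^ (κ - (d + 1))),
      (z1.1.1 i : ℤ) = (z2.1.1 i : ℤ) ∧ (z1.2 i : ℤ) = (z2.2 i : ℤ) := by
    intro i
    have h0 : 2 * i.1 < 2 ^ (κ - d) := by have := i.isLt; omega
    have h1 : 2 * i.1 + 1 < 2 ^ (κ - d) := by have := i.isLt; omega
    have e0 := hv ⟨2 * i.1, h0⟩
    have e1 := hv ⟨2 * i.1 + 1, h1⟩
    rw [xfun_spec0 κ d hd B0 _ _ i ⟨2 * i.1, h0⟩ rfl,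
      xfun_spec0 κ d hd B0 _ _ i ⟨2 * i.1, h0⟩ rfl] at e0
    rw [xfun_spec1 κ d hd B0 _ _ i ⟨2 * i.1 + 1, h1⟩ rfl,
      xfun_spec1 κ d hd B0 _ _ i ⟨2 * i.1 + 1, h1⟩ rfl] at e1
    have hy : (z1.1.1 i : ℤ) = (z2.1.1 i : ℤ) := by linarith
    refine ⟨hy, ?_⟩
    rw [hy] at e0
    unfold loA at e0
    linarith
  have hfst : z1.1 = z2.1 :=
    Subtype.ext (funext fun i => Subtype.ext (hyk i).1)
  have hsnd : z1.2 = z2.2 := funext fun i => Subtype.ext (hyk i).2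
  exact Prod.ext hfst hsnd

end ZetaAux4
private lemma numA (s p S : ℝ) (hp0 : 0 < p) (hp30 : p < 1 / 30) (hS : 30 < S)
    (hSsp : S ≤ s * p) :
    p * (1 - p) * (1 - 30 / S) * (s + 1) ^ 2 ≤ (s - 1 - s * p / 2) * (s * p - 1) := by
  have hsp : 30 < s * p := lt_of_lt_of_le hS hSsp
  have hsppos : 0 < s * p := by linarith
  have hs0 : 0 < s := by nlinarith
  have hs900 : 900 < s := by nlinarith
  have hSpos : 0 < S := by linarith
  have h1 : 1 - 30 / S ≤ 1 - 30 / (s * p) := by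
    have : 30 / (s * p) ≤ 30 / S := by
      rw [div_le_div_iff₀ hsppos hSpos]; nlinarith
    linarith
  have hf : 0 ≤ p * (1 - p) * (s + 1) ^ 2 := by
    apply mul_nonneg (mul_nonneg hp0.le (by linarith)) (sq_nonneg _)
  have h2 : p * (1 - p) * (1 - 30 / S) * (s + 1) ^ 2
      ≤ p * (1 - p) * (1 - 30 / (s * p)) * (s + 1) ^ 2 := by
    nlinarith [mul_le_mul_of_nonneg_left h1 hf]
  refine h2.trans ?_
  have e : p * (1 - p) * (1 - 30 / (s * p)) * (s + 1) ^ 2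
      = p * ((1 - p) * (s * p - 30) * (s + 1) ^ 2) / (s * p) := by
    field_simp
  rw [e, div_le_iff₀ hsppos]
  have core : (1 - p) * (s * p - 30) * (s + 1) ^ 2 ≤ (s - 1 - s * p / 2) * (s * p - 1) * s := by
    nlinarith [mul_nonneg (sq_nonneg s) (show (0:ℝ) ≤ 29 - (65/2) * p + 2 * p ^ 2 by nlinarith [sq_nonneg p]),
      mul_nonneg hs0.le (show (0:ℝ) ≤ 61 - 61 * p + p ^ 2 by nlinarith [sq_nonneg p]),
      mul_nonneg (mul_nonneg (mul_nonneg hs0.le hs0.le) hs0.le) (sq_nonneg p),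
      hp30, hp0]
  nlinarith [mul_le_mul_of_nonneg_left core hp0.le]

private lemma numB (s p S : ℝ) (hp0 : 0 < p) (hp30 : p < 1 / 30) (hS : 30 < S)
    (hSsp : S ≤ s * p) :
    s * p + 1 ≤ p * (1 + p) * (1 + 30 / S) * (s - 1) := by
  have hsp : 30 < s * p := lt_of_lt_of_le hS hSsp
  have hsppos : 0 < s * p := by linarith
  have hs0 : 0 < s := by nlinarith
  have hs900 : 900 < s := by nlinarith
  have hSpos : 0 < S := by linarith
  have h1 : 1 + 30 / (s * p) ≤ 1 + 30 / S := by
    have : 30 / (s * p) ≤ 30 / S := by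
      rw [div_le_div_iff₀ hsppos hSpos]; nlinarith
    linarith
  have hf : 0 ≤ p * (1 + p) * (s - 1) := by
    apply mul_nonneg (mul_nonneg hp0.le (by linarith)) (by linarith)
  have h2 : p * (1 + p) * (1 + 30 / (s * p)) * (s - 1)
      ≤ p * (1 + p) * (1 + 30 / S) * (s - 1) := by
    nlinarith [mul_le_mul_of_nonneg_left h1 hf]
  refine le_trans ?_ h2
  have e : p * (1 + p) * (1 + 30 / (s * p)) * (s - 1)
      = p * ((1 + p) * (s * p + 30) * (s - 1)) / (s * p) := by
    field_simp
  rw [e, le_div_iff₀ hsppos]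
  have core : s * (s * p + 1) ≤ (1 + p) * (s * p + 30) * (s - 1) := by
    nlinarith [mul_nonneg (show (0:ℝ) ≤ s - 900 by linarith)
        (show (0:ℝ) ≤ 29 + 29 * p - p ^ 2 by nlinarith [sq_nonneg p]),
      sq_nonneg (s * p), mul_pos hp0 (show (0:ℝ) < 1 / 30 - p by linarith)]
  nlinarith [mul_le_mul_of_nonneg_left core hp0.le]

private lemma card_intRange (s : ℝ) (hs : 0 ≤ s) :
    ((intRange s).card : ℝ) = 2 * (⌊s / 2⌋ : ℝ) + 1 := by
  have h0 : (0:ℤ) ≤ ⌊s / 2⌋ := Int.floor_nonneg.mpr (by positivity)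
  rw [intRange, Int.card_Icc, show ⌊s / 2⌋ + 1 - -⌊s / 2⌋ = 2 * ⌊s / 2⌋ + 1 by ring]
  have h1 : (((2 * ⌊s / 2⌋ + 1).toNat : ℕ) : ℤ) = 2 * ⌊s / 2⌋ + 1 :=
    Int.toNat_of_nonneg (by omega)
  calc (((2 * ⌊s / 2⌋ + 1).toNat : ℕ) : ℝ) = ((((2 * ⌊s / 2⌋ + 1).toNat : ℕ) : ℤ) : ℝ) := by
        norm_cast
    _ = ((2 * ⌊s / 2⌋ + 1 : ℤ) : ℝ) := by rw [h1]
    _ = 2 * (⌊s / 2⌋ : ℝ) + 1 := by push_cast; ring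

private lemma toNat_cast_real (a : ℤ) (h : 0 ≤ a) : ((a.toNat : ℕ) : ℝ) = (a : ℝ) := by
  have h1 : ((a.toNat : ℕ) : ℤ) = a := Int.toNat_of_nonneg h
  calc ((a.toNat : ℕ) : ℝ) = (((a.toNat : ℕ) : ℤ) : ℝ) := by norm_cast
    _ = (a : ℝ) := by rw [h1]


set_option maxHeartbeats 1600000 in
theorem zeta_induction_bounds
    (κ m : ℕ) (hκ : 1 ≤ κ) (hm : 0 < m)
    (p : ℝ) (hp0 : 0 < p) (hp1 : p ≤ 1)
    (h3 : (30 : ℝ) < (m : ℝ) * p ^ κ) (h4 : p < 1 / 30)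
    (d : ℕ) (hd : d < κ) :
    zeta κ m p (d + 1) * (p * (1 - p) * (1 - 30 / ((m : ℝ) * p ^ κ))) ^ (2 ^ (κ - (d + 1)))
        ≤ zeta κ m p d ∧
      zeta κ m p d ≤
        zeta κ m p (d + 1) * (p * (1 + p) * (1 + 30 / ((m : ℝ) * p ^ κ))) ^ (2 ^ (κ - (d + 1))) := by
  have hmR : (1:ℝ) ≤ (m:ℝ) := by exact_mod_cast hm
  have hs1 : (m : ℝ) * p ^ (d + 1) = (m : ℝ) * p ^ d * p := by rw [pow_succ]; ring
  have hSsp : (m:ℝ) * p ^ κ ≤ (m:ℝ) * p ^ d * p := by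
    rw [← hs1]
    exact mul_le_mul_of_nonneg_left (pow_le_pow_of_le_one hp0.le hp1 (by omega))
      (by positivity)
  have hsp30 : 30 < (m:ℝ) * p ^ d * p := lt_of_lt_of_le h3 hSsp
  have hspos : 0 < (m:ℝ) * p ^ d := by positivity
  have hs900 : 900 < (m:ℝ) * p ^ d := by nlinarith
  have hSpos : (0:ℝ) < (m:ℝ) * p ^ κ := by linarith
  -- floor bounds
  have hB0_le : (⌊(m:ℝ) * p ^ d / 2⌋ : ℝ) ≤ (m:ℝ) * p ^ d / 2 := Int.floor_le _
  have hB0_gt : (m:ℝ) * p ^ d / 2 < ⌊(m:ℝ) * p ^ d / 2⌋ + 1 := Int.lt_floor_add_one _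
  have hB1_le : (⌊(m:ℝ) * p ^ (d+1) / 2⌋ : ℝ) ≤ (m:ℝ) * p ^ d * p / 2 := by
    have h := Int.floor_le ((m:ℝ) * p ^ (d+1) / 2)
    linarith [hs1.le, hs1.ge]
  have hB1_gt : (m:ℝ) * p ^ d * p / 2 < ⌊(m:ℝ) * p ^ (d+1) / 2⌋ + 1 := by
    have h := Int.lt_floor_add_one ((m:ℝ) * p ^ (d+1) / 2)
    linarith [hs1.le, hs1.ge]
  have hB0_nonneg : (0:ℤ) ≤ ⌊(m:ℝ) * p ^ d / 2⌋ := Int.floor_nonneg.mpr (by positivity)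
  have hB1_nonneg : (0:ℤ) ≤ ⌊(m:ℝ) * p ^ (d+1) / 2⌋ := Int.floor_nonneg.mpr (by positivity)
  have hB10 : ⌊(m:ℝ) * p ^ (d+1) / 2⌋ ≤ ⌊(m:ℝ) * p ^ d / 2⌋ := by
    apply Int.floor_le_floor
    rw [hs1]
    nlinarith
  -- cards
  have hMc := card_intRange ((m:ℝ) * p ^ d) (by positivity)
  have hM1c := card_intRange ((m:ℝ) * p ^ (d+1)) (by positivity)
  have hB0R : (0:ℝ) ≤ (⌊(m:ℝ) * p ^ d / 2⌋ : ℝ) := by exact_mod_cast hB0_nonneg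
  have hB1R : (0:ℝ) ≤ (⌊(m:ℝ) * p ^ (d+1) / 2⌋ : ℝ) := by exact_mod_cast hB1_nonneg
  have hB10R : (⌊(m:ℝ) * p ^ (d+1) / 2⌋ : ℝ) ≤ (⌊(m:ℝ) * p ^ d / 2⌋ : ℝ) := by
    exact_mod_cast hB10
  have hMc_pos : (0:ℝ) < ((intRange ((m:ℝ) * p ^ d)).card : ℝ) := by rw [hMc]; linarith
  have hM1c_pos : (0:ℝ) < ((intRange ((m:ℝ) * p ^ (d+1))).card : ℝ) := by rw [hM1c]; linarith
  have hMc_ub : ((intRange ((m:ℝ) * p ^ d)).card : ℝ) ≤ (m:ℝ) * p ^ d + 1 := by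
    rw [hMc]; linarith
  have hMc_lb : (m:ℝ) * p ^ d - 1 ≤ ((intRange ((m:ℝ) * p ^ d)).card : ℝ) := by
    rw [hMc]; linarith
  have hM1c_ub : ((intRange ((m:ℝ) * p ^ (d+1))).card : ℝ) ≤ (m:ℝ) * p ^ d * p + 1 := by
    rw [hM1c]; linarith
  have hM1c_lb : (m:ℝ) * p ^ d * p - 1 ≤ ((intRange ((m:ℝ) * p ^ (d+1))).card : ℝ) := by
    rw [hM1c]; linarith
  -- the L quantity
  have hLt_int : (0:ℤ) ≤ 2 * ⌊(m:ℝ) * p ^ d / 2⌋ + 1 - ⌊(m:ℝ) * p ^ (d+1) / 2⌋ := by omega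
  have hLtr : (((2 * ⌊(m:ℝ) * p ^ d / 2⌋ + 1 - ⌊(m:ℝ) * p ^ (d+1) / 2⌋).toNat : ℕ) : ℝ)
      = 2 * (⌊(m:ℝ) * p ^ d / 2⌋ : ℝ) + 1 - (⌊(m:ℝ) * p ^ (d+1) / 2⌋ : ℝ) := by
    rw [toNat_cast_real _ hLt_int]; push_cast; ring
  have hLt_lb : (m:ℝ) * p ^ d - 1 - (m:ℝ) * p ^ d * p / 2
      ≤ (((2 * ⌊(m:ℝ) * p ^ d / 2⌋ + 1 - ⌊(m:ℝ) * p ^ (d+1) / 2⌋).toNat : ℕ) : ℝ) := by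
    rw [hLtr]; linarith
  have hslack : (0:ℝ) ≤ (m:ℝ) * p ^ d - 1 - (m:ℝ) * p ^ d * p / 2 := by nlinarith
  have hLt_nonneg : (0:ℝ)
      ≤ (((2 * ⌊(m:ℝ) * p ^ d / 2⌋ + 1 - ⌊(m:ℝ) * p ^ (d+1) / 2⌋).toNat : ℕ) : ℝ) := by
    positivity
  -- counting bounds, cast to ℝ
  have hcl := card_lower κ m p d hd hB1_nonneg hB10
  have hcu := card_upper κ m p d hd
  have hclR : (Nat.card (G0 κ m p (d+1)) : ℝ)
        * (((2 * ⌊(m:ℝ) * p ^ d / 2⌋ + 1 - ⌊(m:ℝ) * p ^ (d+1) / 2⌋).toNat : ℕ) : ℝ)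
          ^ 2 ^ (κ - (d+1))
      ≤ (Nat.card (G0 κ m p d) : ℝ) := by exact_mod_cast hcl
  have hcuR : (Nat.card (G0 κ m p d) : ℝ)
      ≤ (Nat.card (G0 κ m p (d+1)) : ℝ)
        * ((intRange ((m:ℝ) * p ^ d)).card : ℝ) ^ 2 ^ (κ - (d+1)) := by exact_mod_cast hcu
  have h2n : 2 ^ (κ - d) = 2 * 2 ^ (κ - (d + 1)) := by
    rw [show κ - d = (κ - (d + 1)) + 1 by omega, pow_succ]; ring
  have hq_nonneg : 0 ≤ p * (1 - p) * (1 - 30 / ((m:ℝ) * p ^ κ)) := by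
    have h30 : 30 / ((m:ℝ) * p ^ κ) ≤ 1 := by rw [div_le_one hSpos]; linarith
    apply mul_nonneg (mul_nonneg hp0.le (by linarith)) (by linarith)
  have hQ_nonneg : 0 ≤ p * (1 + p) * (1 + 30 / ((m:ℝ) * p ^ κ)) := by
    have h30 : (0:ℝ) ≤ 30 / ((m:ℝ) * p ^ κ) := by positivity
    apply mul_nonneg (mul_nonneg hp0.le (by linarith)) (by linarith)
  -- per-factor inequalities
  have hA := numA ((m:ℝ) * p ^ d) p ((m:ℝ) * p ^ κ) hp0 h4 h3 hSsp
  have hB := numB ((m:ℝ) * p ^ d) p ((m:ℝ) * p ^ κ) hp0 h4 h3 hSsp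
  have ineqA : (p * (1 - p) * (1 - 30 / ((m:ℝ) * p ^ κ)))
        * ((intRange ((m:ℝ) * p ^ d)).card : ℝ) ^ 2
      ≤ (((2 * ⌊(m:ℝ) * p ^ d / 2⌋ + 1 - ⌊(m:ℝ) * p ^ (d+1) / 2⌋).toNat : ℕ) : ℝ)
        * ((intRange ((m:ℝ) * p ^ (d+1))).card : ℝ) := by
    calc (p * (1 - p) * (1 - 30 / ((m:ℝ) * p ^ κ)))
          * ((intRange ((m:ℝ) * p ^ d)).card : ℝ) ^ 2
        ≤ (p * (1 - p) * (1 - 30 / ((m:ℝ) * p ^ κ))) * ((m:ℝ) * p ^ d + 1) ^ 2 :=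
          mul_le_mul_of_nonneg_left (pow_le_pow_left₀ hMc_pos.le hMc_ub 2) hq_nonneg
      _ ≤ ((m:ℝ) * p ^ d - 1 - (m:ℝ) * p ^ d * p / 2) * ((m:ℝ) * p ^ d * p - 1) := by
          have e : p * (1 - p) * (1 - 30 / ((m:ℝ) * p ^ κ)) * ((m:ℝ) * p ^ d + 1) ^ 2
              = p * (1 - p) * (1 - 30 / ((m:ℝ) * p ^ κ)) * (((m:ℝ) * p ^ d) + 1) ^ 2 := by ring
          rw [e]; exact hA
      _ ≤ _ := mul_le_mul hLt_lb hM1c_lb (by nlinarith) hLt_nonneg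
  have ineqB : ((intRange ((m:ℝ) * p ^ (d+1))).card : ℝ)
      ≤ (p * (1 + p) * (1 + 30 / ((m:ℝ) * p ^ κ))) * ((intRange ((m:ℝ) * p ^ d)).card : ℝ) := by
    calc ((intRange ((m:ℝ) * p ^ (d+1))).card : ℝ)
        ≤ (m:ℝ) * p ^ d * p + 1 := hM1c_ub
      _ ≤ (p * (1 + p) * (1 + 30 / ((m:ℝ) * p ^ κ))) * ((m:ℝ) * p ^ d - 1) := hB
      _ ≤ _ := mul_le_mul_of_nonneg_left hMc_lb hQ_nonneg
  constructor
  · rw [zeta_eq κ m p (d+1), zeta_eq κ m p d, div_mul_eq_mul_div,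
      div_le_div_iff₀ (by positivity) (by positivity)]
    calc (Nat.card (G0 κ m p (d+1)) : ℝ)
          * (p * (1 - p) * (1 - 30 / ((m:ℝ) * p ^ κ))) ^ 2 ^ (κ - (d+1))
          * ((intRange ((m:ℝ) * p ^ d)).card : ℝ) ^ 2 ^ (κ - d)
        = (Nat.card (G0 κ m p (d+1)) : ℝ)
          * ((p * (1 - p) * (1 - 30 / ((m:ℝ) * p ^ κ)))
              * ((intRange ((m:ℝ) * p ^ d)).card : ℝ) ^ 2) ^ 2 ^ (κ - (d+1)) := by
          rw [h2n, pow_mul, mul_pow (p * (1 - p) * (1 - 30 / ((m:ℝ) * p ^ κ)))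
            (((intRange ((m:ℝ) * p ^ d)).card : ℝ) ^ 2) (2 ^ (κ - (d+1)))]; ring
      _ ≤ (Nat.card (G0 κ m p (d+1)) : ℝ)
          * ((((2 * ⌊(m:ℝ) * p ^ d / 2⌋ + 1 - ⌊(m:ℝ) * p ^ (d+1) / 2⌋).toNat : ℕ) : ℝ)
              * ((intRange ((m:ℝ) * p ^ (d+1))).card : ℝ)) ^ 2 ^ (κ - (d+1)) :=
          mul_le_mul_of_nonneg_left
            (pow_le_pow_left₀ (mul_nonneg hq_nonneg (by positivity)) ineqA _)
            (Nat.cast_nonneg _)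
      _ = ((Nat.card (G0 κ m p (d+1)) : ℝ)
            * (((2 * ⌊(m:ℝ) * p ^ d / 2⌋ + 1 - ⌊(m:ℝ) * p ^ (d+1) / 2⌋).toNat : ℕ) : ℝ)
              ^ 2 ^ (κ - (d+1)))
          * ((intRange ((m:ℝ) * p ^ (d+1))).card : ℝ) ^ 2 ^ (κ - (d+1)) := by ring
      _ ≤ (Nat.card (G0 κ m p d) : ℝ)
          * ((intRange ((m:ℝ) * p ^ (d+1))).card : ℝ) ^ 2 ^ (κ - (d+1)) :=
          mul_le_mul_of_nonneg_right hclR (by positivity)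
  · rw [zeta_eq κ m p (d+1), zeta_eq κ m p d, div_mul_eq_mul_div,
      div_le_div_iff₀ (by positivity) (by positivity)]
    calc (Nat.card (G0 κ m p d) : ℝ)
          * ((intRange ((m:ℝ) * p ^ (d+1))).card : ℝ) ^ 2 ^ (κ - (d+1))
        ≤ ((Nat.card (G0 κ m p (d+1)) : ℝ)
            * ((intRange ((m:ℝ) * p ^ d)).card : ℝ) ^ 2 ^ (κ - (d+1)))
          * ((intRange ((m:ℝ) * p ^ (d+1))).card : ℝ) ^ 2 ^ (κ - (d+1)) :=
          mul_le_mul_of_nonneg_right hcuR (by positivity)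
      _ = (Nat.card (G0 κ m p (d+1)) : ℝ)
          * (((intRange ((m:ℝ) * p ^ d)).card : ℝ)
              * ((intRange ((m:ℝ) * p ^ (d+1))).card : ℝ)) ^ 2 ^ (κ - (d+1)) := by ring
      _ ≤ (Nat.card (G0 κ m p (d+1)) : ℝ)
          * (((intRange ((m:ℝ) * p ^ d)).card : ℝ)
              * ((p * (1 + p) * (1 + 30 / ((m:ℝ) * p ^ κ)))
                  * ((intRange ((m:ℝ) * p ^ d)).card : ℝ))) ^ 2 ^ (κ - (d+1)) :=
          mul_le_mul_of_nonneg_left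
            (pow_le_pow_left₀ (mul_nonneg hMc_pos.le hM1c_pos.le)
              (mul_le_mul_of_nonneg_left ineqB hMc_pos.le) _)
            (Nat.cast_nonneg _)
      _ = (Nat.card (G0 κ m p (d+1)) : ℝ)
          * ((p * (1 + p) * (1 + 30 / ((m:ℝ) * p ^ κ)))
              * ((intRange ((m:ℝ) * p ^ d)).card : ℝ) ^ 2) ^ 2 ^ (κ - (d+1)) := by
          rw [show ((intRange ((m:ℝ) * p ^ d)).card : ℝ)
              * ((p * (1 + p) * (1 + 30 / ((m:ℝ) * p ^ κ)))
                  * ((intRange ((m:ℝ) * p ^ d)).card : ℝ))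
              = (p * (1 + p) * (1 + 30 / ((m:ℝ) * p ^ κ)))
                  * ((intRange ((m:ℝ) * p ^ d)).card : ℝ) ^ 2 from by ring]
      _ = (Nat.card (G0 κ m p (d+1)) : ℝ)
            * (p * (1 + p) * (1 + 30 / ((m:ℝ) * p ^ κ))) ^ 2 ^ (κ - (d+1))
          * ((intRange ((m:ℝ) * p ^ d)).card : ℝ) ^ 2 ^ (κ - d) := by
          rw [h2n, pow_mul, mul_pow (p * (1 + p) * (1 + 30 / ((m:ℝ) * p ^ κ)))
            (((intRange ((m:ℝ) * p ^ d)).card : ℝ) ^ 2) (2 ^ (κ - (d+1)))]; ring
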